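/- arXiv:2407.04194 — 2 statements merged into one kernel-verified Lean document; each statement's English description precedes it below -/
import Mathlib

section
/- Fix integers n, M, p ≥ 1 and a real τ > 0. Let (X_i, Y_i)_{i=1}^n ⊂ ℝ^p × {0,1} be observed data and (X*_i, Y*_i)_{i=1}^M ⊂ ℝ^p × {0,1} be synthetic data. Assume: (a) the synthetic data are not separable, i.e., for every nonzero β ∈ ℝ^p there exists i ∈ {1,…,M} with (2Y*_i − 1)⟨X*_i, β⟩ < 0; and (b) the M × p matrix whose i-th row is (X*_i)ᵀ has rank p. Then the function Q(β) = Σ_{i=1}^n log(1 + exp(−(2Y_i − 1)⟨X_i, β⟩)) + (τ/M) Σ_{i=1}^M log(1 + exp(−(2Y*_i − 1)⟨X*_i, β⟩)) attains its infimum over ℝ^p at exactly one point; equivalently, the MAP estimator β̂_M under the catalytic prior exists and is unique. -/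
open scoped RealInnerProductSpace BigOperators

/-- The logistic log-partition function `ρ(t) = log(1 + eᵗ)`. -/
noncomputable def rho (t : ℝ) : ℝ := Real.log (1 + Real.exp t)

/-- The negative log-posterior `Q` for logistic regression under a catalytic prior:
observed data `(X i, Y i)`, synthetic data `(Xs i, Ys i)`, tuning parameter `τ`. -/
noncomputable def Qobj {n M p : ℕ} (τ : ℝ)
    (X : Fin n → EuclideanSpace ℝ (Fin p)) (Y : Fin n → ℝ)
    (Xs : Fin M → EuclideanSpace ℝ (Fin p)) (Ys : Fin M → ℝ)
    (β : EuclideanSpace ℝ (Fin p)) : ℝ :=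
  (∑ i, Real.log (1 + Real.exp (-((2 * Y i - 1) * ⟪X i, β⟫)))) +
    (τ / M) * ∑ i, Real.log (1 + Real.exp (-((2 * Ys i - 1) * ⟪Xs i, β⟫)))

/-!
`Qobj` is a nonnegatively weighted sum of terms `ρ⟪v, β⟫` with `v = (1 - 2y) x`.
Non-separability says that every direction `β ≠ 0` makes some synthetic `⟪v, β⟫` positive.
Since `ρ t ≥ max t 0`, compactness of the unit sphere then gives `Q β ≥ ε ‖β‖`, so a
minimizer exists. The same hypothesis gives, for `β ≠ β'`, a positively weighted `v` with
`⟪v, β⟫ ≠ ⟪v, β'⟫`, so strict convexity of `ρ` makes `Q` strictly convex and the minimizer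
unique.
-/

open Set Filter

theorem StrictConvexOn.existsUnique_forall_le {E : Type*} [TopologicalSpace E]
    [AddCommGroup E] [Module ℝ E] {f : E → ℝ} (hf : StrictConvexOn ℝ univ f) (hcont : Continuous f)
    (hlim : Tendsto f (cocompact E) atTop) : ∃! b, ∀ x, f b ≤ f x :=
  let ⟨b, hb⟩ := hcont.exists_forall_le hlim
  ⟨b, hb, fun _ hy => hf.eq_of_isMinOn (fun x _ => hy x) (fun x _ => hb x) trivial trivial⟩

theorem exists_pos_mul_norm_le_of_posHomogeneous {E : Type*} [NormedAddCommGroup E]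
    [NormedSpace ℝ E] [ProperSpace E] {g : E → ℝ} (hcont : Continuous g)
    (hhom : ∀ (c : ℝ) (x : E), 0 ≤ c → g (c • x) = c * g x) (hpos : ∀ x ≠ 0, 0 < g x) :
    ∃ ε > 0, ∀ x, ε * ‖x‖ ≤ g x := by
  have hg0 : g 0 = 0 := by simpa using hhom 0 0 le_rfl
  rcases subsingleton_or_nontrivial E with hE | hE
  · exact ⟨1, one_pos, fun x => by simp [Subsingleton.elim x 0, hg0]⟩
  obtain ⟨u, hu, hmin⟩ := (isCompact_sphere (0 : E) 1).exists_isMinOn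
    (NormedSpace.sphere_nonempty.2 zero_le_one) hcont.continuousOn
  have hu0 : u ≠ 0 := ne_zero_of_mem_unit_sphere ⟨u, hu⟩
  refine ⟨g u, hpos u hu0, fun x => ?_⟩
  rcases eq_or_ne x 0 with rfl | hx
  · simp [hg0]
  have hxs : ‖x‖⁻¹ • x ∈ Metric.sphere (0 : E) 1 := by
    rw [mem_sphere_zero_iff_norm]; exact norm_smul_inv_norm hx
  calc g u * ‖x‖ ≤ g (‖x‖⁻¹ • x) * ‖x‖ := by gcongr; exact hmin hxs
    _ = g x := by
      rw [hhom _ _ (by positivity), mul_comm, ← mul_assoc,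
        mul_inv_cancel₀ (norm_ne_zero_iff.2 hx), one_mul]

theorem continuous_rho : Continuous rho :=
  (continuous_const.add Real.continuous_exp).log fun t => (by positivity : (0 : ℝ) < 1 + _).ne'

theorem rho_nonneg (t : ℝ) : 0 ≤ rho t :=
  Real.log_nonneg (by linarith [Real.exp_pos t])

theorem le_rho (t : ℝ) : t ≤ rho t := by
  simpa [Real.log_exp, rho] using
    Real.log_le_log (Real.exp_pos t) (by linarith : Real.exp t ≤ 1 + Real.exp t)

theorem hasDerivAt_rho (t : ℝ) : HasDerivAt rho (Real.exp t / (1 + Real.exp t)) t :=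
  ((Real.hasDerivAt_exp t).const_add 1).log (by positivity)

theorem strictConvexOn_rho : StrictConvexOn ℝ univ rho := by
  refine strictConvexOn_univ_of_deriv2_pos continuous_rho fun t => ?_
  have hderiv : deriv rho = fun t => Real.exp t / (1 + Real.exp t) :=
    funext fun t => (hasDerivAt_rho t).deriv
  have h2 : HasDerivAt (fun t => Real.exp t / (1 + Real.exp t))
      ((Real.exp t * (1 + Real.exp t) - Real.exp t * Real.exp t) / (1 + Real.exp t) ^ 2) t :=
    (Real.hasDerivAt_exp t).div ((Real.hasDerivAt_exp t).const_add 1) (by positivity)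
  rw [Function.iterate_succ_apply, Function.iterate_one, hderiv, h2.deriv]
  ring_nf
  positivity

section LogisticLoss

variable {ι E : Type*} [Fintype ι] [NormedAddCommGroup E] [InnerProductSpace ℝ E]
  {w : ι → ℝ} {v : ι → E}

noncomputable def logisticLoss (w : ι → ℝ) (v : ι → E) (β : E) : ℝ :=
  ∑ i, w i * rho ⟪v i, β⟫

theorem continuous_logisticLoss (w : ι → ℝ) (v : ι → E) : Continuous (logisticLoss w v) :=
  continuous_finsetSum _ fun _ _ =>
    continuous_const.mul (continuous_rho.comp (continuous_const.inner continuous_id))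

theorem strictConvexOn_logisticLoss (hw : ∀ i, 0 ≤ w i)
    (hsep : ∀ x ≠ 0, ∃ i, 0 < w i ∧ ⟪v i, x⟫ ≠ 0) :
    StrictConvexOn ℝ univ (logisticLoss w v) := by
  refine ⟨convex_univ, fun x _ y _ hxy a b ha hb hab => ?_⟩
  obtain ⟨j, hwj, hj⟩ := hsep (x - y) (sub_ne_zero.2 hxy)
  rw [inner_sub_right, sub_ne_zero] at hj
  simp only [logisticLoss, smul_eq_mul, Finset.mul_sum, ← Finset.sum_add_distrib, inner_add_right,
    real_inner_smul_right]
  refine Finset.sum_lt_sum (fun i _ => ?_) ⟨j, Finset.mem_univ j, ?_⟩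
  · have := strictConvexOn_rho.convexOn.2 trivial trivial ha.le hb.le hab
      (x := ⟪v i, x⟫) (y := ⟪v i, y⟫)
    simp only [smul_eq_mul] at this
    linarith [mul_le_mul_of_nonneg_left this (hw i)]
  · have := strictConvexOn_rho.2 trivial trivial hj ha hb hab
    simp only [smul_eq_mul] at this
    linarith [mul_lt_mul_of_pos_left this hwj]

theorem tendsto_logisticLoss_cocompact [FiniteDimensional ℝ E] (hw : ∀ i, 0 ≤ w i)
    (hsep : ∀ x ≠ 0, ∃ i, 0 < w i ∧ 0 < ⟪v i, x⟫) :
    Tendsto (logisticLoss w v) (cocompact E) atTop := by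
  obtain ⟨ε, hε, hle⟩ := exists_pos_mul_norm_le_of_posHomogeneous
    (g := fun x => ∑ i, w i * max ⟪v i, x⟫ 0)
    (continuous_finsetSum _ fun _ _ =>
      continuous_const.mul ((continuous_const.inner continuous_id).max continuous_const))
    (fun c x hc => by
      simp only [real_inner_smul_right, Finset.mul_sum]
      refine Finset.sum_congr rfl fun _ _ => ?_
      rw [← mul_zero c, ← mul_max_of_nonneg _ _ hc, mul_zero]
      ring)
    (fun x hx => by
      obtain ⟨j, hwj, hj⟩ := hsep x hx
      exact Finset.sum_pos' (fun i _ => mul_nonneg (hw i) (le_max_right _ _))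
        ⟨j, Finset.mem_univ j, mul_pos hwj (lt_max_of_lt_left hj)⟩)
  refine tendsto_atTop_mono (fun x => (hle x).trans ?_)
    (tendsto_norm_cocompact_atTop.const_mul_atTop hε)
  exact Finset.sum_le_sum fun i _ =>
    mul_le_mul_of_nonneg_left (max_le (le_rho _) (rho_nonneg _)) (hw i)

theorem existsUnique_forall_logisticLoss_le [FiniteDimensional ℝ E] (hw : ∀ i, 0 ≤ w i)
    (hsep : ∀ x ≠ 0, ∃ i, 0 < w i ∧ 0 < ⟪v i, x⟫) :
    ∃! b, ∀ x, logisticLoss w v b ≤ logisticLoss w v x :=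
  (strictConvexOn_logisticLoss hw fun x hx => (hsep x hx).imp fun _ h => ⟨h.1, h.2.ne'⟩
    ).existsUnique_forall_le (continuous_logisticLoss w v) (tendsto_logisticLoss_cocompact hw hsep)

end LogisticLoss

theorem stmt0_general (n M p : ℕ)
    (τ : ℝ) (hτ : 0 < τ)
    (X : Fin n → EuclideanSpace ℝ (Fin p)) (Y : Fin n → ℝ)
    (Xs : Fin M → EuclideanSpace ℝ (Fin p)) (Ys : Fin M → ℝ)
    (hnonsep : ∀ β : EuclideanSpace ℝ (Fin p), β ≠ 0 →
      ∃ i : Fin M, (2 * Ys i - 1) * ⟪Xs i, β⟫ < 0) :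
    ∃! b : EuclideanSpace ℝ (Fin p),
      ∀ β : EuclideanSpace ℝ (Fin p), Qobj τ X Y Xs Ys b ≤ Qobj τ X Y Xs Ys β := by
  have hQ : Qobj τ X Y Xs Ys = logisticLoss (Sum.elim (fun _ => 1) fun _ => τ / M)
      (Sum.elim (fun i => (1 - 2 * Y i) • X i) fun i => (1 - 2 * Ys i) • Xs i) := by
    funext β
    simp only [Qobj, logisticLoss, rho, Fintype.sum_sum_type, Sum.elim_inl, Sum.elim_inr,
      one_mul, Finset.mul_sum, real_inner_smul_left, neg_mul_eq_neg_mul, neg_sub]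
  rw [hQ]
  refine existsUnique_forall_logisticLoss_le (fun i => ?_) fun β hβ => ?_
  · cases i <;> simp only [Sum.elim_inl, Sum.elim_inr] <;> positivity
  · obtain ⟨i, hi⟩ := hnonsep β hβ
    refine ⟨Sum.inr i, div_pos hτ (Nat.cast_pos.2 i.pos), ?_⟩
    simp only [Sum.elim_inr, real_inner_smul_left]
    linarith

/-- **Existence and uniqueness of the MAP estimator under a catalytic prior**
(logistic regression).  If the synthetic data are not separable and the synthetic
covariate matrix has full column rank `p`, then the objective `Q` attains its
infimum over `ℝ^p` at exactly one point. -/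
theorem stmt0 (n M p : ℕ) (hn : 1 ≤ n) (hM : 1 ≤ M) (hp : 1 ≤ p)
    (τ : ℝ) (hτ : 0 < τ)
    (X : Fin n → EuclideanSpace ℝ (Fin p)) (Y : Fin n → ℝ)
    (hY : ∀ i, Y i = 0 ∨ Y i = 1)
    (Xs : Fin M → EuclideanSpace ℝ (Fin p)) (Ys : Fin M → ℝ)
    (hYs : ∀ i, Ys i = 0 ∨ Ys i = 1)
    (hnonsep : ∀ β : EuclideanSpace ℝ (Fin p), β ≠ 0 →
      ∃ i : Fin M, (2 * Ys i - 1) * ⟪Xs i, β⟫ < 0)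
    (hrank : (Matrix.of (fun (i : Fin M) (j : Fin p) => Xs i j)).rank = p) :
    ∃! b : EuclideanSpace ℝ (Fin p),
      ∀ β : EuclideanSpace ℝ (Fin p), Qobj τ X Y Xs Ys b ≤ Qobj τ X Y Xs Ys β :=
  stmt0_general n M p τ hτ X Y Xs Ys hnonsep
end

section
/- Let (X*_i, Y*_i), i = 1, …, M, be i.i.d. copies of a pair (X*, Y*) with X* ∈ ℝ^p and Y* ∈ {0,1}. Assume there exist η₀ > 0 and ρ₀ ∈ (0,1] such that P(|⟨X*, β⟩| > η₀) ≥ ρ₀ for every unit vector β ∈ ℝ^p, and there is q ∈ (0,1) with q ≤ P(Y* = 1 | X*) ≤ 1 − q almost surely. Set ν := min(q, 1−q)·ρ₀. Then for every unit vector β ∈ ℝ^p: (a) P( max{0, −(2Y* − 1)⟨X*, β⟩} > η₀ ) ≥ ν, and hence E[ max{0, −(2Y* − 1)⟨X*, β⟩} ] ≥ η₀ν; and (b) P( (1/M) Σ_{i=1}^M max{0, −(2Y*_i − 1)⟨X*_i, β⟩} ≥ η₀ν/2 ) ≥ 1 − exp(−Mν²/2). -/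
open MeasureTheory ProbabilityTheory
open scoped RealInnerProductSpace BigOperators ENNReal

/-!
If `⟪X*, β⟫ < -η₀` and `Y* = 1`, or `⟪X*, β⟫ > η₀` and `Y* = 0`, the hinge statistic exceeds `η₀`.
Both events `{⟪X*, β⟫ < -η₀}` and `{⟪X*, β⟫ > η₀}` are `X*`-measurable, so integrating
`q ≤ P(Y* = 1 | X*) ≤ 1 - q` over them shows that the required label has probability at least `q`
times theirs. Hence `P(hinge > η₀) ≥ q P(|⟪X*, β⟫| > η₀) ≥ ν`, and Markov's inequality bounds the
mean. For the empirical mean, each hinge term dominates `η₀` times the indicator of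
`{hinge > η₀}`; these indicators are independent, `[0, 1]`-valued and have mean at least `ν`, so by
Hoeffding's inequality their average falls below `ν / 2` with probability at most
`exp (-2M (ν / 2)²)`.
-/

section CondExpIndicator

variable {Ω : Type*} {m m₀ : MeasurableSpace Ω} {μ : Measure Ω} [IsFiniteMeasure μ]
  {s t : Set Ω} {c : ℝ}

lemma setIntegral_condExp_indicator_one (hm : m ≤ m₀) (hs : MeasurableSet[m] s)
    (ht : MeasurableSet t) : ∫ ω in s, μ[t.indicator 1 | m] ω ∂μ = μ.real (s ∩ t) := by
  rw [setIntegral_condExp hm ((integrable_const 1).indicator ht) hs, integral_indicator_one ht,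
    measureReal_restrict_apply ht, Set.inter_comm]

lemma mul_measureReal_le_measureReal_inter (hm : m ≤ m₀) (hs : MeasurableSet[m] s)
    (ht : MeasurableSet t) (hc : ∀ᵐ ω ∂μ, c ≤ μ[t.indicator 1 | m] ω) :
    c * μ.real s ≤ μ.real (s ∩ t) := by
  rw [← setIntegral_condExp_indicator_one hm hs ht, mul_comm, ← smul_eq_mul,
    ← setIntegral_const]
  exact setIntegral_mono_ae integrableOn_const integrable_condExp.integrableOn hc

lemma mul_measureReal_le_measureReal_diff (hm : m ≤ m₀) (hs : MeasurableSet[m] s)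
    (ht : MeasurableSet t) (hc : ∀ᵐ ω ∂μ, μ[t.indicator 1 | m] ω ≤ 1 - c) :
    c * μ.real s ≤ μ.real (s \ t) := by
  have hle : ∫ ω in s, μ[t.indicator 1 | m] ω ∂μ ≤ ∫ ω in s, (1 - c) ∂μ :=
    setIntegral_mono_ae integrable_condExp.integrableOn integrableOn_const hc
  rw [setIntegral_condExp_indicator_one hm hs ht, setIntegral_const, smul_eq_mul] at hle
  linarith [measureReal_inter_add_sdiff (μ := μ) (s := s) ht]

end CondExpIndicator

def hingeLoss (y a : ℝ) : ℝ := max 0 (-((2 * y - 1) * a))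

lemma hingeLoss_nonneg (y a : ℝ) : 0 ≤ hingeLoss y a := le_max_left _ _

lemma continuous_hingeLoss : Continuous (Function.uncurry hingeLoss) := by
  unfold hingeLoss; fun_prop

lemma lt_hingeLoss_one {η a : ℝ} (h : a < -η) : η < hingeLoss 1 a :=
  lt_max_of_lt_right (by linarith)

lemma lt_hingeLoss_zero {η a : ℝ} (h : η < a) : η < hingeLoss 0 a :=
  lt_max_of_lt_right (by linarith)

section HingeTail

variable {Ω E : Type*} [MeasurableSpace Ω] {μ : Measure Ω} [IsFiniteMeasure μ]
  [NormedAddCommGroup E] [InnerProductSpace ℝ E] [MeasurableSpace E] [OpensMeasurableSpace E]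
  {X : Ω → E} {Y : Ω → ℝ}

lemma measurable_hingeLoss_inner (β : E) :
    Measurable fun z : E × ℝ => hingeLoss z.2 ⟪z.1, β⟫ :=
  continuous_hingeLoss.measurable.comp
    (measurable_snd.prodMk ((continuous_id.inner continuous_const).measurable.comp measurable_fst))

lemma mul_measureReal_abs_inner_lt_le_measureReal_lt_hingeLoss
    (hX : Measurable X) (hY : Measurable Y) (hYbin : ∀ᵐ ω ∂μ, Y ω = 0 ∨ Y ω = 1)
    {q : ℝ} (hq : 0 ≤ q)
    (hcond : ∀ᵐ ω ∂μ,
      q ≤ (μ[(fun ω' => if Y ω' = 1 then (1 : ℝ) else 0) |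
            MeasurableSpace.comap X inferInstance]) ω ∧
      (μ[(fun ω' => if Y ω' = 1 then (1 : ℝ) else 0) |
            MeasurableSpace.comap X inferInstance]) ω ≤ 1 - q)
    (η : ℝ) (β : E) :
    q * μ.real {ω | η < |⟪X ω, β⟫|} ≤ μ.real {ω | η < hingeLoss (Y ω) ⟪X ω, β⟫} := by
  have hinner : Measurable fun v : E => ⟪v, β⟫ :=
    (continuous_id.inner continuous_const).measurable
  set A := X ⁻¹' {v | ⟪v, β⟫ < -η}
  set B := X ⁻¹' {v | η < ⟪v, β⟫}
  set T := Y ⁻¹' {1}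
  have hA : MeasurableSet[MeasurableSpace.comap X inferInstance] A :=
    ⟨_, measurableSet_lt hinner measurable_const, rfl⟩
  have hB : MeasurableSet[MeasurableSpace.comap X inferInstance] B :=
    ⟨_, measurableSet_lt measurable_const hinner, rfl⟩
  have hT : MeasurableSet T := hY (measurableSet_singleton 1)
  have hindT : (fun ω => if Y ω = 1 then (1 : ℝ) else 0) = T.indicator 1 := by
    ext ω; by_cases h : Y ω = 1 <;> simp [T, h]
  rw [hindT] at hcond
  have hAB : {ω | η < |⟪X ω, β⟫|} = A ∪ B := by
    ext ω
    simp only [A, B, Set.mem_ofPred_eq, Set.mem_union, Set.mem_preimage, lt_abs]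
    constructor <;> rintro (h | h) <;> first | (left; linarith) | (right; linarith)
  have hsub : (A ∩ T ∪ B \ T : Set Ω) ≤ᵐ[μ] {ω | η < hingeLoss (Y ω) ⟪X ω, β⟫} := by
    filter_upwards [hYbin] with ω hω
    rintro (⟨hωA, hωT⟩ | ⟨hωB, hωT⟩)
    · change η < hingeLoss (Y ω) _
      rw [show Y ω = 1 from hωT]
      exact lt_hingeLoss_one hωA
    · change η < hingeLoss (Y ω) _
      rw [hω.resolve_right hωT]
      exact lt_hingeLoss_zero hωB
  calc q * μ.real {ω | η < |⟪X ω, β⟫|}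
      ≤ q * μ.real A + q * μ.real B := by
        rw [hAB, ← mul_add]; exact mul_le_mul_of_nonneg_left (measureReal_union_le _ _) hq
    _ ≤ μ.real (A ∩ T) + μ.real (B \ T) :=
        add_le_add
          (mul_measureReal_le_measureReal_inter hX.comap_le hA hT (hcond.mono fun _ h => h.1))
          (mul_measureReal_le_measureReal_diff hX.comap_le hB hT (hcond.mono fun _ h => h.2))
    _ = μ.real (A ∩ T ∪ B \ T) :=
        (measureReal_union (Set.disjoint_sdiff_left.mono_right Set.inter_subset_right).symm
          ((hX.comap_le _ hB).diff hT)).symm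
    _ ≤ _ := ENNReal.toReal_mono (measure_ne_top _ _) (measure_mono_ae hsub)

end HingeTail

section Tail

variable {Ω : Type*} [MeasurableSpace Ω] {μ : Measure Ω}

lemma ofReal_mul_le_lintegral_of_le_measure {f : Ω → ℝ} (hf : AEMeasurable f μ) {a b : ℝ}
    (ha : 0 ≤ a) (hb : ENNReal.ofReal b ≤ μ {ω | a < f ω}) :
    ENNReal.ofReal (a * b) ≤ ∫⁻ ω, ENNReal.ofReal (f ω) ∂μ :=
  calc ENNReal.ofReal (a * b) = ENNReal.ofReal a * ENNReal.ofReal b := ENNReal.ofReal_mul ha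
    _ ≤ ENNReal.ofReal a * μ {ω | ENNReal.ofReal a ≤ ENNReal.ofReal (f ω)} := by
        gcongr
        exact hb.trans (measure_mono fun ω hω => ENNReal.ofReal_le_ofReal (le_of_lt hω))
    _ ≤ _ := mul_meas_ge_le_lintegral₀ hf.ennreal_ofReal _

lemma measureReal_sum_lt_le_exp_of_mem_Icc [IsProbabilityMeasure μ] {ι : Type*} [Fintype ι]
    {Z : ι → Ω → ℝ} (hind : iIndepFun Z μ) (hZm : ∀ i, AEMeasurable (Z i) μ)
    (hZ : ∀ i, ∀ᵐ ω ∂μ, Z i ω ∈ Set.Icc 0 1) {ν : ℝ} (hν : 0 ≤ ν)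
    (hmean : ∀ i, ν ≤ μ[Z i]) :
    μ.real {ω | ∑ i, Z i ω < Fintype.card ι * ν / 2} ≤
      Real.exp (-(Fintype.card ι * ν ^ 2) / 2) := by
  set n : ℝ := (Fintype.card ι : ℝ)
  have hsubG : ∀ i ∈ Finset.univ, HasSubgaussianMGF (fun ω => μ[Z i] - Z i ω)
      ((‖(1 : ℝ) - 0‖₊ / 2) ^ 2) μ := fun i _ =>
    (hasSubgaussianMGF_of_mem_Icc (hZm i) (hZ i)).neg.congr (ae_of_all _ fun ω => by simp)
  have hcentred : iIndepFun (fun i ω => μ[Z i] - Z i ω) μ :=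
    (hind.comp (fun i (x : ℝ) => μ[Z i] - x) fun _ => measurable_const.sub measurable_id :)
  have hsum_mean : n * ν ≤ ∑ i, μ[Z i] := by
    simpa [n] using Finset.sum_le_sum fun i (_ : i ∈ Finset.univ) => hmean i
  calc μ.real {ω | ∑ i, Z i ω < n * ν / 2}
      ≤ μ.real {ω | n * ν / 2 ≤ ∑ i, (μ[Z i] - Z i ω)} := by
        refine measureReal_mono fun ω hω => ?_
        simp only [Set.mem_ofPred_eq, Finset.sum_sub_distrib] at hω ⊢
        linarith
    _ ≤ Real.exp (-(n * ν / 2) ^ 2 / (2 * ∑ i, ((‖(1 : ℝ) - 0‖₊ / 2) ^ 2 : NNReal))) :=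
        HasSubgaussianMGF.measure_sum_ge_le_of_iIndepFun hcentred hsubG (by positivity)
    _ = Real.exp (-(n * ν ^ 2) / 2) := by
        have hproxy : ((∑ _ : ι, (‖(1 : ℝ) - 0‖₊ / 2) ^ 2 : NNReal) : ℝ) = n / 4 := by
          push_cast; simp [n]; ring
        rw [hproxy]
        rcases eq_or_ne n 0 with h | h
        · simp [h]
        · congr 1; field_simp; ring

lemma mul_indicator_Ioi_le {η x : ℝ} (hx : 0 ≤ x) : η * (Set.Ioi η).indicator 1 x ≤ x := by
  by_cases h : η < x
  · simpa [Set.indicator_of_mem (Set.mem_Ioi.2 h)] using h.le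
  · simpa [Set.indicator_of_notMem (Set.notMem_Ioi.2 (not_lt.1 h))] using hx

lemma indicator_one_mem_Icc (s : Set ℝ) (x : ℝ) : s.indicator 1 x ∈ Set.Icc (0 : ℝ) 1 := by
  by_cases h : x ∈ s <;> simp [h]

lemma measureReal_mean_lt_le_exp_of_le_measureReal_lt [IsProbabilityMeasure μ]
    {ι α : Type*} [Fintype ι] [Nonempty ι] [MeasurableSpace α] {W : ι → Ω → α}
    (hind : iIndepFun W μ) (hW : ∀ i, Measurable (W i)) {f : α → ℝ} (hf : Measurable f)
    (hf0 : ∀ a, 0 ≤ f a) {η ν : ℝ} (hη : 0 < η) (hν : 0 ≤ ν)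
    (hp : ∀ i, ν ≤ μ.real {ω | η < f (W i ω)}) :
    μ.real {ω | (Fintype.card ι : ℝ)⁻¹ * ∑ i, f (W i ω) < η * ν / 2} ≤
      Real.exp (-(Fintype.card ι * ν ^ 2) / 2) := by
  set g : α → ℝ := fun a => (Set.Ioi η).indicator 1 (f a)
  have hg : Measurable g := (measurable_const.indicator measurableSet_Ioi).comp hf
  have hmean : ∀ i, ν ≤ μ[g ∘ W i] := fun i => by
    have hgW : g ∘ W i = {ω | η < f (W i ω)}.indicator 1 := by
      ext ω; by_cases h : η < f (W i ω) <;> simp [g, h]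
    have hmeas : MeasurableSet {ω | η < f (W i ω)} :=
      measurableSet_lt measurable_const (hf.comp (hW i))
    rw [hgW, integral_indicator_one hmeas]
    exact hp i
  refine le_trans (measureReal_mono fun ω hω => ?_)
    (measureReal_sum_lt_le_exp_of_mem_Icc (hind.comp (fun _ => g) fun _ => hg)
      (fun i => (hg.comp (hW i)).aemeasurable)
      (fun i => ae_of_all _ fun ω => indicator_one_mem_Icc _ _) hν hmean)
  have hcount : η * ∑ i, g (W i ω) ≤ ∑ i, f (W i ω) := by
    rw [Finset.mul_sum]
    exact Finset.sum_le_sum fun i _ => mul_indicator_Ioi_le (hf0 _)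
  simp only [Set.mem_ofPred_eq, Function.comp_apply] at hω ⊢
  rw [inv_mul_lt_iff₀ (by exact_mod_cast Fintype.card_pos)] at hω
  by_contra! hge
  nlinarith [mul_le_mul_of_nonneg_left hge hη.le]

lemma ofReal_one_sub_le_measure_le [IsProbabilityMeasure μ] {F : Ω → ℝ} {c b : ℝ}
    (hb : μ.real {ω | F ω < c} ≤ b) : ENNReal.ofReal (1 - b) ≤ μ {ω | c ≤ F ω} := by
  have hcompl : {ω | F ω < c}ᶜ = {ω | c ≤ F ω} := by
    ext ω; simp only [Set.mem_compl_iff, Set.mem_ofPred_eq, not_lt]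
  have hcover := measureReal_union_le (μ := μ) {ω | F ω < c} {ω | c ≤ F ω}
  rw [← hcompl, Set.union_compl_self, probReal_univ] at hcover
  refine ENNReal.ofReal_le_of_le_toReal ?_
  rw [← hcompl]
  change 1 - b ≤ μ.real _
  linarith

end Tail

theorem stmt9_general {Ω : Type*} [MeasurableSpace Ω] (μ : Measure Ω) [IsProbabilityMeasure μ]
    {M p : ℕ} (hM : 1 ≤ M)
    (Xs : Fin M → Ω → EuclideanSpace ℝ (Fin p)) (Ys : Fin M → Ω → ℝ)
    (Xstar : Ω → EuclideanSpace ℝ (Fin p)) (Ystar : Ω → ℝ)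
    (hmeasXs : ∀ i, Measurable (Xs i)) (hmeasYs : ∀ i, Measurable (Ys i))
    (hmeasXst : Measurable Xstar) (hmeasYst : Measurable Ystar)
    (hiid : iIndepFun (fun i ω => (Xs i ω, Ys i ω)) μ)
    (hident : ∀ i, Measure.map (fun ω => (Xs i ω, Ys i ω)) μ
        = Measure.map (fun ω => (Xstar ω, Ystar ω)) μ)
    (hYbin : ∀ᵐ ω ∂μ, Ystar ω = 0 ∨ Ystar ω = 1)
    (η₀ ρ₀ q : ℝ) (hη : 0 < η₀) (hρ0 : 0 < ρ₀)
    (hq0 : 0 < q) (hq1 : q < 1)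
    (hball : ∀ β : EuclideanSpace ℝ (Fin p), ‖β‖ = 1 →
      ENNReal.ofReal ρ₀ ≤ μ {ω | η₀ < |⟪Xstar ω, β⟫|})
    (hcond : ∀ᵐ ω ∂μ,
      q ≤ (μ[(fun ω' => if Ystar ω' = 1 then (1 : ℝ) else 0) |
            MeasurableSpace.comap Xstar inferInstance]) ω ∧
      (μ[(fun ω' => if Ystar ω' = 1 then (1 : ℝ) else 0) |
            MeasurableSpace.comap Xstar inferInstance]) ω ≤ 1 - q) :
    ∀ β : EuclideanSpace ℝ (Fin p), ‖β‖ = 1 →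
      (ENNReal.ofReal (min q (1 - q) * ρ₀) ≤
        μ {ω | η₀ < max 0 (-((2 * Ystar ω - 1) * ⟪Xstar ω, β⟫))}) ∧
      (ENNReal.ofReal (η₀ * (min q (1 - q) * ρ₀)) ≤
        ∫⁻ ω, ENNReal.ofReal (max 0 (-((2 * Ystar ω - 1) * ⟪Xstar ω, β⟫))) ∂μ) ∧
      (ENNReal.ofReal (1 - Real.exp (-(M * (min q (1 - q) * ρ₀) ^ 2) / 2)) ≤
        μ {ω | η₀ * (min q (1 - q) * ρ₀) / 2 ≤
          (M : ℝ)⁻¹ * ∑ i, max 0 (-((2 * Ys i ω - 1) * ⟪Xs i ω, β⟫))}) := by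
  intro β hβ
  set ν := min q (1 - q) * ρ₀
  have hν : 0 ≤ ν := mul_nonneg (le_min hq0.le (by linarith)) hρ0.le
  have hpair : Measurable fun ω => (Xstar ω, Ystar ω) := hmeasXst.prodMk hmeasYst
  have htail : ν ≤ μ.real {ω | η₀ < hingeLoss (Ystar ω) ⟪Xstar ω, β⟫} :=
    calc ν ≤ q * ρ₀ := mul_le_mul_of_nonneg_right (min_le_left _ _) hρ0.le
      _ ≤ q * μ.real {ω | η₀ < |⟪Xstar ω, β⟫|} := mul_le_mul_of_nonneg_left
          ((ENNReal.ofReal_le_iff_le_toReal (measure_ne_top _ _)).1 (hball β hβ)) hq0.le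
      _ ≤ _ := mul_measureReal_abs_inner_lt_le_measureReal_lt_hingeLoss hmeasXst hmeasYst hYbin
          hq0.le hcond η₀ β
  have hpairs : ∀ i, Measurable fun ω => (Xs i ω, Ys i ω) :=
    fun i => (hmeasXs i).prodMk (hmeasYs i)
  have htails : ∀ i, ν ≤ μ.real {ω | η₀ < hingeLoss (Ys i ω) ⟪Xs i ω, β⟫} := fun i =>
    htail.trans_eq <| congrArg ENNReal.toReal <|
      (IdentDistrib.mk (hpairs i).aemeasurable hpair.aemeasurable (hident i)).measure_mem_eq
        (measurableSet_lt measurable_const (measurable_hingeLoss_inner β)) |>.symm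
  have : Nonempty (Fin M) := ⟨⟨0, hM⟩⟩
  have hdev := measureReal_mean_lt_le_exp_of_le_measureReal_lt hiid hpairs
    (measurable_hingeLoss_inner β) (fun _ => hingeLoss_nonneg _ _) hη hν htails
  rw [Fintype.card_fin] at hdev
  have htail' := ENNReal.ofReal_le_of_le_toReal htail
  exact ⟨htail', ofReal_mul_le_lintegral_of_le_measure
    ((measurable_hingeLoss_inner β).comp hpair).aemeasurable hη.le htail',
    ofReal_one_sub_le_measure_le hdev⟩

/-- **Small-ball lower bounds for the hinge-type statistic
`max{0, −(2Y* − 1)⟨X*, β⟩}`.**  If `P(|⟨X*, β⟩| > η₀) ≥ ρ₀` for every unit `β` and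
`q ≤ P(Y* = 1 ∣ X*) ≤ 1 − q` a.s., then with `ν = min(q, 1−q)ρ₀`, for every unit
`β`: (a) `P(max{0, −(2Y* − 1)⟨X*, β⟩} > η₀) ≥ ν`, hence
`E[max{0, −(2Y* − 1)⟨X*, β⟩}] ≥ η₀ν`; and (b) the empirical mean of the hinge
statistic over `M` i.i.d. copies is at least `η₀ν/2` with probability at least
`1 − exp(−Mν²/2)`. -/
theorem stmt9 {Ω : Type*} [MeasurableSpace Ω] (μ : Measure Ω) [IsProbabilityMeasure μ]
    {M p : ℕ} (hM : 1 ≤ M)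
    (Xs : Fin M → Ω → EuclideanSpace ℝ (Fin p)) (Ys : Fin M → Ω → ℝ)
    (Xstar : Ω → EuclideanSpace ℝ (Fin p)) (Ystar : Ω → ℝ)
    (hmeasXs : ∀ i, Measurable (Xs i)) (hmeasYs : ∀ i, Measurable (Ys i))
    (hmeasXst : Measurable Xstar) (hmeasYst : Measurable Ystar)
    (hiid : iIndepFun (fun i ω => (Xs i ω, Ys i ω)) μ)
    (hident : ∀ i, Measure.map (fun ω => (Xs i ω, Ys i ω)) μ
        = Measure.map (fun ω => (Xstar ω, Ystar ω)) μ)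
    (hYbin : ∀ᵐ ω ∂μ, Ystar ω = 0 ∨ Ystar ω = 1)
    (η₀ ρ₀ q : ℝ) (hη : 0 < η₀) (hρ0 : 0 < ρ₀) (hρ1 : ρ₀ ≤ 1)
    (hq0 : 0 < q) (hq1 : q < 1)
    (hball : ∀ β : EuclideanSpace ℝ (Fin p), ‖β‖ = 1 →
      ENNReal.ofReal ρ₀ ≤ μ {ω | η₀ < |⟪Xstar ω, β⟫|})
    (hcond : ∀ᵐ ω ∂μ,
      q ≤ (μ[(fun ω' => if Ystar ω' = 1 then (1 : ℝ) else 0) |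
            MeasurableSpace.comap Xstar inferInstance]) ω ∧
      (μ[(fun ω' => if Ystar ω' = 1 then (1 : ℝ) else 0) |
            MeasurableSpace.comap Xstar inferInstance]) ω ≤ 1 - q) :
    ∀ β : EuclideanSpace ℝ (Fin p), ‖β‖ = 1 →
      (ENNReal.ofReal (min q (1 - q) * ρ₀) ≤
        μ {ω | η₀ < max 0 (-((2 * Ystar ω - 1) * ⟪Xstar ω, β⟫))}) ∧
      (ENNReal.ofReal (η₀ * (min q (1 - q) * ρ₀)) ≤
        ∫⁻ ω, ENNReal.ofReal (max 0 (-((2 * Ystar ω - 1) * ⟪Xstar ω, β⟫))) ∂μ) ∧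
      (ENNReal.ofReal (1 - Real.exp (-(M * (min q (1 - q) * ρ₀) ^ 2) / 2)) ≤
        μ {ω | η₀ * (min q (1 - q) * ρ₀) / 2 ≤
          (M : ℝ)⁻¹ * ∑ i, max 0 (-((2 * Ys i ω - 1) * ⟪Xs i ω, β⟫))}) :=
  stmt9_general μ hM Xs Ys Xstar Ystar hmeasXs hmeasYs hmeasXst hmeasYst hiid hident hYbin η₀ ρ₀ q
    hη hρ0 hq0 hq1 hball hcond
end
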